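/- arXiv:0910.3383 — 3 statements merged into one kernel-verified Lean document; each statement's English description precedes it below -/
import Mathlib

section
/- Weakening is admissible for negative μMALL formulas: if every formula Pᵢ in a finite collection is negative (built only from ⅋, ⊥, &, ⊤, ∀, ≠, ν), then the sequent ⊢ P₁, …, Pₙ, 1 is provable; the proof is by induction on the total size of the collection, using ⊥ (i.e., λx⃗.⊥) as coinvariant in the ν case. -/
namespace MuMALL

/-- Propositional μMALL formulas, with fixed-point binders in de Bruijn style. -/
inductive Fm : Type where
  | one | bot | zero | top
  | atom (n : ℕ)
  | natom (n : ℕ)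
  | var (n : ℕ)
  | nvar (n : ℕ)
  | tensor (P Q : Fm)
  | parr (P Q : Fm)
  | oplus (P Q : Fm)
  | wth (P Q : Fm)
  | mu (B : Fm)
  | nu (B : Fm)

/-- Negation, exchanging each connective for its dual. The parameter `d` counts
the fixed-point binders crossed: variables bound by an enclosing fixed point are
left untouched (this realizes `(νB)^⊥ = μB̄` with `B̄ = λp.(B p^⊥)^⊥`), while
free predicate variables and atoms are dualized. -/
def negAux : ℕ → Fm → Fm
  | _, .one => .bot
  | _, .bot => .one
  | _, .zero => .top
  | _, .top => .zero
  | _, .atom n => .natom n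
  | _, .natom n => .atom n
  | d, .var n => if n < d then .var n else .nvar n
  | d, .nvar n => if n < d then .nvar n else .var n
  | d, .tensor P Q => .parr (negAux d P) (negAux d Q)
  | d, .parr P Q => .tensor (negAux d P) (negAux d Q)
  | d, .oplus P Q => .wth (negAux d P) (negAux d Q)
  | d, .wth P Q => .oplus (negAux d P) (negAux d Q)
  | d, .mu B => .nu (negAux (d + 1) B)
  | d, .nu B => .mu (negAux (d + 1) B)

/-- Negation of a formula. -/
def neg (P : Fm) : Fm := negAux 0 P

/-- Substitution of a (closed) formula `Q` for the predicate variable of de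
Bruijn index `k` (negated occurrences receive `Q^⊥`). -/
def subst : ℕ → Fm → Fm → Fm
  | _, _, .one => .one
  | _, _, .bot => .bot
  | _, _, .zero => .zero
  | _, _, .top => .top
  | _, _, .atom n => .atom n
  | _, _, .natom n => .natom n
  | k, Q, .var n => if n = k then Q else .var n
  | k, Q, .nvar n => if n = k then neg Q else .nvar n
  | k, Q, .tensor P R => .tensor (subst k Q P) (subst k Q R)
  | k, Q, .parr P R => .parr (subst k Q P) (subst k Q R)
  | k, Q, .oplus P R => .oplus (subst k Q P) (subst k Q R)
  | k, Q, .wth P R => .wth (subst k Q P) (subst k Q R)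
  | k, Q, .mu B => .mu (subst (k + 1) Q B)
  | k, Q, .nu B => .nu (subst (k + 1) Q B)

/-- `scopedLt d P`: every predicate variable occurrence of `P` is bound, its
index staying below `d` plus the number of fixed-point binders crossed.
`scopedLt 0 P` means `P` has no free predicate variable. -/
def scopedLt : ℕ → Fm → Prop
  | _, .one | _, .bot | _, .zero | _, .top => True
  | _, .atom _ | _, .natom _ => True
  | d, .var n => n < d
  | d, .nvar n => n < d
  | d, .tensor P Q | d, .parr P Q | d, .oplus P Q | d, .wth P Q =>
      scopedLt d P ∧ scopedLt d Q
  | d, .mu B | d, .nu B => scopedLt (d + 1) B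

/-- Monotonicity: no occurrence of a negated predicate variable. -/
def noNegVar : Fm → Prop
  | .one | .bot | .zero | .top => True
  | .atom _ | .natom _ => True
  | .var _ => True
  | .nvar _ => False
  | .tensor P Q | .parr P Q | .oplus P Q | .wth P Q => noNegVar P ∧ noNegVar Q
  | .mu B | .nu B => noNegVar B

/-- Provability of one-sided μMALL sequents: MALL rules, the `μ` unfolding rule,
and the `ν` coinduction rule with an arbitrary coinvariant `S`. -/
inductive Valid : List Fm → Prop where
  | exch {Γ Δ} : Γ.Perm Δ → Valid Γ → Valid Δ
  | init (P : Fm) : Valid [P, neg P]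
  | cut {Γ Δ} (P : Fm) : Valid (P :: Γ) → Valid (neg P :: Δ) → Valid (Γ ++ Δ)
  | one : Valid [.one]
  | bot {Γ} : Valid Γ → Valid (.bot :: Γ)
  | top {Γ} : Valid (.top :: Γ)
  | tensor {Γ Δ P Q} : Valid (P :: Γ) → Valid (Q :: Δ) →
      Valid (.tensor P Q :: (Γ ++ Δ))
  | parr {Γ P Q} : Valid (P :: Q :: Γ) → Valid (.parr P Q :: Γ)
  | oplus₁ {Γ P Q} : Valid (P :: Γ) → Valid (.oplus P Q :: Γ)
  | oplus₂ {Γ P Q} : Valid (Q :: Γ) → Valid (.oplus P Q :: Γ)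
  | wth {Γ P Q} : Valid (P :: Γ) → Valid (Q :: Γ) → Valid (.wth P Q :: Γ)
  | muR {Γ B} : Valid (subst 0 (.mu B) B :: Γ) → Valid (.mu B :: Γ)
  | nuR {Γ B} (S : Fm) : Valid (S :: Γ) → Valid [neg S, subst 0 S B] →
      Valid (.nu B :: Γ)

/-- Negative formulas: built only from `⅋, ⊥, &, ⊤, ν` (and positive occurrences
of bound predicate variables), containing no atoms. -/
def isNeg : Fm → Prop
  | .bot | .top => True
  | .parr P Q | .wth P Q => isNeg P ∧ isNeg Q
  | .nu B => isNeg B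
  | .var _ => True
  | _ => False

/-- Size of a formula (terms ignored; units, connectives and variables count). -/
def sz : Fm → ℕ
  | .one | .bot | .zero | .top => 1
  | .atom _ | .natom _ | .var _ | .nvar _ => 1
  | .tensor P Q | .parr P Q | .oplus P Q | .wth P Q => sz P + sz Q + 1
  | .mu B | .nu B => sz B + 1

lemma sz_subst_bot (k : ℕ) (B : Fm) : sz (subst k .bot B) = sz B := by
  induction B generalizing k with
  | var n => simp only [subst]; split <;> rfl
  | nvar n => simp only [subst]; split <;> rfl
  | tensor P Q ihP ihQ => simp [subst, sz, ihP, ihQ]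
  | parr P Q ihP ihQ => simp [subst, sz, ihP, ihQ]
  | oplus P Q ihP ihQ => simp [subst, sz, ihP, ihQ]
  | wth P Q ihP ihQ => simp [subst, sz, ihP, ihQ]
  | mu B ih => simp [subst, sz, ih]
  | nu B ih => simp [subst, sz, ih]
  | _ => rfl

lemma isNeg_subst_bot (k : ℕ) (B : Fm) (h : isNeg B) : isNeg (subst k .bot B) := by
  induction B generalizing k with
  | var n => simp only [subst]; split <;> trivial
  | parr P Q ihP ihQ => exact ⟨ihP k h.1, ihQ k h.2⟩
  | wth P Q ihP ihQ => exact ⟨ihP k h.1, ihQ k h.2⟩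
  | nu B ih => exact ih (k+1) h
  | _ => first | exact h | trivial

lemma scopedLt_subst_bot (k : ℕ) (B : Fm) (h : scopedLt (k+1) B) :
    scopedLt k (subst k .bot B) := by
  induction B generalizing k with
  | var n =>
      simp only [subst]
      split
      · trivial
      · exact lt_of_le_of_ne (Nat.lt_succ_iff.mp h) (by assumption)
  | nvar n =>
      simp only [subst]
      split
      · trivial
      · exact lt_of_le_of_ne (Nat.lt_succ_iff.mp h) (by assumption)
  | tensor P Q ihP ihQ => exact ⟨ihP k h.1, ihQ k h.2⟩
  | parr P Q ihP ihQ => exact ⟨ihP k h.1, ihQ k h.2⟩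
  | oplus P Q ihP ihQ => exact ⟨ihP k h.1, ihQ k h.2⟩
  | wth P Q ihP ihQ => exact ⟨ihP k h.1, ihQ k h.2⟩
  | mu B ih => exact ih (k+1) h
  | nu B ih => exact ih (k+1) h
  | _ => trivial

/-- Weakening is admissible for negative formulas: for any finite collection of
closed negative formulas `P₁, …, Pₙ`, the sequent `⊢ P₁, …, Pₙ, 1` is provable
(in the `ν` case with `λx⃗.⊥` as coinvariant). -/
theorem weakening_negative (Γ : List Fm)
    (hneg : ∀ P ∈ Γ, isNeg P) (hclosed : ∀ P ∈ Γ, scopedLt 0 P) :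
    Valid (Γ ++ [Fm.one]) := by
  suffices H : ∀ n Γ, (Γ.map sz).sum ≤ n → (∀ P ∈ Γ, isNeg P) →
      (∀ P ∈ Γ, scopedLt 0 P) → Valid (Γ ++ [Fm.one]) from
    H _ Γ le_rfl hneg hclosed
  clear hneg hclosed Γ
  intro n
  induction n with
  | zero =>
      intro Γ hn _ _
      match Γ, hn with
      | [], _ => exact Valid.one
      | P :: Γ', hn =>
          exfalso
          have : 1 ≤ sz P := by cases P <;> simp [sz]
          simp [List.map_cons] at hn; omega
  | succ n ih =>
      intro Γ hn hneg hclosed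
      match Γ with
      | [] => exact Valid.one
      | P :: Γ' =>
          have hnP : isNeg P := hneg P (by simp)
          have hcP : scopedLt 0 P := hclosed P (by simp)
          have hneg' : ∀ Q ∈ Γ', isNeg Q := fun Q hQ => hneg Q (by simp [hQ])
          have hcl' : ∀ Q ∈ Γ', scopedLt 0 Q := fun Q hQ => hclosed Q (by simp [hQ])
          have hsum : sz P + (Γ'.map sz).sum ≤ n + 1 := by
            simpa [List.map_cons] using hn
          cases P with
          | bot =>
              exact Valid.bot (ih Γ' (by simp [sz] at hsum; omega) hneg' hcl')
          | top => exact Valid.top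
          | var m => exact absurd hcP (by simp [scopedLt])
          | parr P Q =>
              refine Valid.parr (ih (P :: Q :: Γ') ?_ ?_ ?_)
              · simp only [List.map_cons, List.sum_cons]
                simp [sz] at hsum; omega
              · intro R hR
                rcases List.mem_cons.mp hR with rfl | hR
                · exact hnP.1
                rcases List.mem_cons.mp hR with rfl | hR
                · exact hnP.2
                · exact hneg' R hR
              · intro R hR
                rcases List.mem_cons.mp hR with rfl | hR
                · exact hcP.1
                rcases List.mem_cons.mp hR with rfl | hR
                · exact hcP.2
                · exact hcl' R hR
          | wth P Q =>
              refine Valid.wth (ih (P :: Γ') ?_ ?_ ?_) (ih (Q :: Γ') ?_ ?_ ?_)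
              · simp only [List.map_cons, List.sum_cons]; simp [sz] at hsum; omega
              · intro R hR
                rcases List.mem_cons.mp hR with rfl | hR
                · exact hnP.1
                · exact hneg' R hR
              · intro R hR
                rcases List.mem_cons.mp hR with rfl | hR
                · exact hcP.1
                · exact hcl' R hR
              · simp only [List.map_cons, List.sum_cons]; simp [sz] at hsum; omega
              · intro R hR
                rcases List.mem_cons.mp hR with rfl | hR
                · exact hnP.2
                · exact hneg' R hR
              · intro R hR
                rcases List.mem_cons.mp hR with rfl | hR
                · exact hcP.2
                · exact hcl' R hR
          | nu B =>
              refine Valid.nuR .bot ?_ ?_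
              · exact Valid.bot (ih Γ' (by simp [sz] at hsum; omega) hneg' hcl')
              · have hsub : Valid ([subst 0 .bot B] ++ [Fm.one]) := by
                  refine ih [subst 0 .bot B] ?_ ?_ ?_
                  · simp only [List.map_cons, List.map_nil, List.sum_cons,
                      List.sum_nil, sz_subst_bot]
                    simp [sz] at hsum; omega
                  · intro R hR; simp at hR; subst hR
                    exact isNeg_subst_bot 0 B hnP
                  · intro R hR; simp at hR; subst hR
                    exact scopedLt_subst_bot 0 B hcP
                have : neg Fm.bot = Fm.one := rfl
                rw [this]
                exact Valid.exch (List.Perm.swap _ _ _) hsub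
          | _ => exact absurd hnP (by simp [isNeg])

end MuMALL
end

section
/- The exponential-free promotion rule is derivable for the fixed-point encoding of exponentials: encoding [?P] := μ(λp. ⊥ ⊕ (p ⅋ p) ⊕ [P]) and [!P] := [?P^⊥]^⊥ = ν(λp. 1 & (p ⊗ p) & [P]), if Γ consists only of formulas of the form [?Q] and ⊢ Γ, [P] is provable, then ⊢ Γ, [!P] is provable, using the tensor of the duals of Γ's formulas as the coinvariant. -/
namespace MuMALL

/-- The fixed-point encoding of `?P`: `[?P] := μ(λp. ⊥ ⊕ (p ⅋ p) ⊕ [P])`. -/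
def whyNot (P : Fm) : Fm :=
  .mu (.oplus .bot (.oplus (.parr (.var 0) (.var 0)) P))

/-- The encoding of `!P`: `[!P] := [?P^⊥]^⊥ = ν(λp. 1 & (p ⊗ p) & [P])`. -/
def ofCourse (P : Fm) : Fm := neg (whyNot (neg P))

theorem scopedLt_mono : ∀ (P : Fm) {d e : ℕ}, d ≤ e → scopedLt d P → scopedLt e P := by
  intro P
  induction P <;> intro d e hde hs <;> simp only [scopedLt] at hs ⊢ <;> try trivial
  case var n => omega
  case nvar n => omega
  case tensor _ _ ih1 ih2 => exact ⟨ih1 hde hs.1, ih2 hde hs.2⟩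
  case parr _ _ ih1 ih2 => exact ⟨ih1 hde hs.1, ih2 hde hs.2⟩
  case oplus _ _ ih1 ih2 => exact ⟨ih1 hde hs.1, ih2 hde hs.2⟩
  case wth _ _ ih1 ih2 => exact ⟨ih1 hde hs.1, ih2 hde hs.2⟩
  case mu _ ih => exact ih (by omega) hs
  case nu _ ih => exact ih (by omega) hs

theorem negAux_eq_of_scoped : ∀ (P : Fm) {d : ℕ}, scopedLt d P → ∀ {e : ℕ}, d ≤ e →
    negAux e P = negAux d P := by
  intro P
  induction P <;> intro d hs e hde <;> simp only [scopedLt] at hs <;>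
    simp only [negAux] <;> try rfl
  case var n => rw [if_pos hs, if_pos (lt_of_lt_of_le hs hde)]
  case nvar n => rw [if_pos hs, if_pos (lt_of_lt_of_le hs hde)]
  case tensor _ _ ih1 ih2 => rw [ih1 hs.1 hde, ih2 hs.2 hde]
  case parr _ _ ih1 ih2 => rw [ih1 hs.1 hde, ih2 hs.2 hde]
  case oplus _ _ ih1 ih2 => rw [ih1 hs.1 hde, ih2 hs.2 hde]
  case wth _ _ ih1 ih2 => rw [ih1 hs.1 hde, ih2 hs.2 hde]
  case mu _ ih => rw [ih hs (by omega : d + 1 ≤ e + 1)]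
  case nu _ ih => rw [ih hs (by omega : d + 1 ≤ e + 1)]

theorem scopedLt_negAux : ∀ (P : Fm) {d : ℕ} (e : ℕ), scopedLt d P → scopedLt d (negAux e P) := by
  intro P
  induction P <;> intro d e hs <;> simp only [scopedLt, negAux] at hs ⊢ <;> try trivial
  case var n => split <;> simpa [scopedLt]
  case nvar n => split <;> simpa [scopedLt]
  case tensor _ _ ih1 ih2 => exact ⟨ih1 e hs.1, ih2 e hs.2⟩
  case parr _ _ ih1 ih2 => exact ⟨ih1 e hs.1, ih2 e hs.2⟩
  case oplus _ _ ih1 ih2 => exact ⟨ih1 e hs.1, ih2 e hs.2⟩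
  case wth _ _ ih1 ih2 => exact ⟨ih1 e hs.1, ih2 e hs.2⟩
  case mu _ ih => exact ih (e + 1) hs
  case nu _ ih => exact ih (e + 1) hs

theorem negAux_negAux : ∀ (P : Fm) {d : ℕ}, scopedLt d P → negAux d (negAux d P) = P := by
  intro P
  induction P <;> intro d hs <;> simp only [scopedLt] at hs <;>
    simp only [negAux] <;> try rfl
  case var n => rw [if_pos hs]; simp only [negAux]; rw [if_pos hs]
  case nvar n => rw [if_pos hs]; simp only [negAux]; rw [if_pos hs]
  case tensor _ _ ih1 ih2 => rw [ih1 hs.1, ih2 hs.2]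
  case parr _ _ ih1 ih2 => rw [ih1 hs.1, ih2 hs.2]
  case oplus _ _ ih1 ih2 => rw [ih1 hs.1, ih2 hs.2]
  case wth _ _ ih1 ih2 => rw [ih1 hs.1, ih2 hs.2]
  case mu _ ih => rw [ih hs]
  case nu _ ih => rw [ih hs]

theorem subst_eq_of_scoped : ∀ (P : Fm) {d : ℕ}, scopedLt d P → ∀ {k : ℕ} (Q : Fm), d ≤ k →
    subst k Q P = P := by
  intro P
  induction P <;> intro d hs k Q hdk <;> simp only [scopedLt] at hs <;>
    simp only [subst] <;> try rfl
  case var n => rw [if_neg (by omega)]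
  case nvar n => rw [if_neg (by omega)]
  case tensor _ _ ih1 ih2 => rw [ih1 hs.1 Q hdk, ih2 hs.2 Q hdk]
  case parr _ _ ih1 ih2 => rw [ih1 hs.1 Q hdk, ih2 hs.2 Q hdk]
  case oplus _ _ ih1 ih2 => rw [ih1 hs.1 Q hdk, ih2 hs.2 Q hdk]
  case wth _ _ ih1 ih2 => rw [ih1 hs.1 Q hdk, ih2 hs.2 Q hdk]
  case mu _ ih => rw [ih hs Q (by omega : d + 1 ≤ k + 1)]
  case nu _ ih => rw [ih hs Q (by omega : d + 1 ≤ k + 1)]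

theorem neg_neg_of_scoped {P : Fm} (hP : scopedLt 0 P) : neg (neg P) = P :=
  negAux_negAux P hP

/-- Tensor of the duals of the formulas of `Γ`. -/
def tens : List Fm → Fm
  | [] => .one
  | F :: Γ => .tensor (neg F) (tens Γ)

theorem valid_tens : ∀ Γ : List Fm, Valid (tens Γ :: Γ)
  | [] => Valid.one
  | F :: Γ => by
      have h1 : Valid (neg F :: [F]) := Valid.exch (List.Perm.swap _ _ _) (Valid.init F)
      have h2 := Valid.tensor h1 (valid_tens Γ)
      simpa [tens] using h2

theorem valid_negTens : ∀ (Γ : List Fm) (Δ : List Fm), (∀ F ∈ Γ, scopedLt 0 F) →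
    Valid (Γ ++ Δ) → Valid (neg (tens Γ) :: Δ)
  | [], Δ, _, h => Valid.bot h
  | F :: Γ, Δ, hs, h => by
      have hF : scopedLt 0 F := hs F (by simp)
      have h1 : Valid (Γ ++ (F :: Δ)) := Valid.exch List.perm_middle.symm h
      have h2 : Valid (neg (tens Γ) :: F :: Δ) :=
        valid_negTens Γ (F :: Δ) (fun G hG => hs G (by simp [hG])) h1
      have h3 : Valid (F :: neg (tens Γ) :: Δ) := Valid.exch (List.Perm.swap _ _ _) h2
      have h4 : Valid (.parr F (neg (tens Γ)) :: Δ) := Valid.parr h3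
      have e : neg (tens (F :: Γ)) = .parr F (neg (tens Γ)) := by
        have e2 : negAux 0 (negAux 0 F) = F := negAux_negAux F hF
        show negAux 0 (.tensor (neg F) (tens Γ)) = _
        simp only [negAux, neg, e2]
      rw [e]
      exact h4

theorem scopedLt_whyNot {Q : Fm} (hQ : scopedLt 0 Q) : scopedLt 0 (whyNot Q) := by
  simp only [whyNot, scopedLt]
  refine ⟨trivial, ⟨by omega, by omega⟩, scopedLt_mono Q (by omega) hQ⟩

theorem whyNot_unfold (Q : Fm) (hQ : scopedLt 0 Q) :
    subst 0 (Fm.mu (.oplus .bot (.oplus (.parr (.var 0) (.var 0)) Q)))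
      (.oplus .bot (.oplus (.parr (.var 0) (.var 0)) Q)) =
      .oplus .bot (.oplus (.parr (whyNot Q) (whyNot Q)) Q) := by
  simp only [subst]
  norm_num
  rw [subst_eq_of_scoped Q hQ _ (Nat.le_refl 0)]
  exact ⟨rfl, rfl⟩

theorem valid_weak {Q : Fm} {Δ : List Fm} (hQ : scopedLt 0 Q) (h : Valid Δ) :
    Valid (whyNot Q :: Δ) := by
  show Valid (Fm.mu (.oplus .bot (.oplus (.parr (.var 0) (.var 0)) Q)) :: Δ)
  apply Valid.muR
  rw [whyNot_unfold Q hQ]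
  exact Valid.oplus₁ (Valid.bot h)

theorem valid_contr {Q : Fm} {Δ : List Fm} (hQ : scopedLt 0 Q)
    (h : Valid (whyNot Q :: whyNot Q :: Δ)) : Valid (whyNot Q :: Δ) := by
  show Valid (Fm.mu (.oplus .bot (.oplus (.parr (.var 0) (.var 0)) Q)) :: Δ)
  apply Valid.muR
  rw [whyNot_unfold Q hQ]
  exact Valid.oplus₂ (Valid.oplus₁ (Valid.parr h))

theorem valid_weakList {Γ Δ : List Fm}
    (hΓ : ∀ F ∈ Γ, ∃ Q, scopedLt 0 Q ∧ F = whyNot Q) (h : Valid Δ) : Valid (Γ ++ Δ) := by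
  induction Γ with
  | nil => exact h
  | cons F Γ ih =>
      obtain ⟨Q, hQ, rfl⟩ := hΓ F (by simp)
      exact valid_weak hQ (ih fun G hG => hΓ G (by simp [hG]))

theorem valid_contrList : ∀ (Γ : List Fm) {Δ : List Fm},
    (∀ F ∈ Γ, ∃ Q, scopedLt 0 Q ∧ F = whyNot Q) →
    Valid (Γ ++ Γ ++ Δ) → Valid (Γ ++ Δ)
  | [], Δ, _, h => h
  | F :: Γ, Δ, hΓ, h => by
      obtain ⟨Q, hQ, rfl⟩ := hΓ F (by simp)
      have h1 : Valid (whyNot Q :: whyNot Q :: (Γ ++ (Γ ++ Δ))) := by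
        refine Valid.exch ?_ h
        simp only [List.cons_append, List.append_assoc]
        exact List.Perm.cons _ List.perm_middle
      have h2 : Valid (whyNot Q :: (Γ ++ (Γ ++ Δ))) := valid_contr hQ h1
      have h3 : Valid (Γ ++ Γ ++ (whyNot Q :: Δ)) := by
        refine Valid.exch ?_ h2
        simp only [List.append_assoc]
        exact ((List.Perm.append_left Γ List.perm_middle).trans List.perm_middle).symm
      have h4 : Valid (Γ ++ (whyNot Q :: Δ)) :=
        valid_contrList Γ (fun G hG => hΓ G (by simp [hG])) h3
      refine Valid.exch ?_ h4
      simp only [List.cons_append]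
      exact List.perm_middle

/-- Promotion is derivable for the fixed-point encoding of the exponentials:
if `Γ` consists only of formulas of the form `[?Q]` and `⊢ Γ, [P]` is provable,
then so is `⊢ Γ, [!P]` (using the tensor of the duals of the formulas of `Γ` as
coinvariant). -/
theorem promotion_derivable (Γ : List Fm) (P : Fm)
    (hΓ : ∀ F ∈ Γ, ∃ Q, scopedLt 0 Q ∧ F = whyNot Q)
    (hP : scopedLt 0 P)
    (h : Valid (Γ ++ [P])) :
    Valid (Γ ++ [ofCourse P]) := by
  have hclosed : ∀ F ∈ Γ, scopedLt 0 F := by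
    intro F hF
    obtain ⟨Q, hQ, rfl⟩ := hΓ F hF
    exact scopedLt_whyNot hQ
  set S : Fm := tens Γ with hS
  set B : Fm := Fm.wth .one (.wth (.tensor (.var 0) (.var 0)) P) with hB
  have hoc : ofCourse P = .nu B := by
    have e1 : negAux 1 (negAux 0 P) = negAux 0 (negAux 0 P) :=
      negAux_eq_of_scoped (negAux 0 P) (scopedLt_negAux P 0 hP) (by omega)
    have e2 : negAux 0 (negAux 0 P) = P := negAux_negAux P hP
    simp [ofCourse, whyNot, neg, negAux, e1, e2, hB]
  have hsubst : subst 0 S B = Fm.wth .one (.wth (.tensor S S) P) := by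
    rw [hB]
    simp only [subst]
    norm_num
    rw [subst_eq_of_scoped P hP S (Nat.le_refl 0)]
  have perm_snoc : ∀ (X : Fm) (L : List Fm), (X :: L).Perm (L ++ [X]) := by
    intro X L
    simpa using (List.perm_middle (a := X) (l₁ := L) (l₂ := [])).symm
  -- premises of the & introductions
  have hone : Valid (Fm.one :: Γ) :=
    Valid.exch (perm_snoc _ _).symm (valid_weakList hΓ Valid.one)
  have htens : Valid (Fm.tensor S S :: Γ) := by
    have h1 : Valid (Fm.tensor S S :: (Γ ++ Γ)) := Valid.tensor (valid_tens Γ) (valid_tens Γ)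
    have h2 : Valid (Γ ++ Γ ++ [Fm.tensor S S]) := Valid.exch (perm_snoc _ _) h1
    have h3 : Valid (Γ ++ [Fm.tensor S S]) := valid_contrList Γ hΓ h2
    exact Valid.exch (perm_snoc _ _).symm h3
  have hp : Valid (P :: Γ) := Valid.exch (perm_snoc _ _).symm h
  have hC : Valid (Fm.wth .one (.wth (.tensor S S) P) :: Γ) :=
    Valid.wth hone (Valid.wth htens hp)
  have hC' : Valid (Γ ++ [Fm.wth .one (.wth (.tensor S S) P)]) :=
    Valid.exch (perm_snoc _ _) hC
  have hnegS : Valid [neg S, subst 0 S B] := by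
    rw [hsubst]
    exact valid_negTens Γ [Fm.wth .one (.wth (.tensor S S) P)] hclosed hC'
  have hnu : Valid (Fm.nu B :: Γ) := Valid.nuR S (valid_tens Γ) hnegS
  rw [hoc] at *
  exact Valid.exch (perm_snoc _ _) hnu

end MuMALL
end

section
/- The focalization-graph precedence relation ≺ on the formulas of the conclusion sequent of a μMALL derivation is acyclic; in particular, when the conclusion consists only of synchronous formulas, there exists a formula that is minimal for ≺ (a valid focus). -/
namespace MuMALL

/-- Locations: paths identifying occurrences of (sub)formulas. -/
abbrev Loc : Type := List ℕ

/-- Sequents of located formulas. -/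
abbrev Sequent : Type := Multiset (Loc × Fm)

/-- Cut-free μMALL derivations over located sequents; each rule gives the
sublocations of the principal location to the subformulas it introduces. -/
inductive Deriv : Sequent → Type where
  | init (ℓ ℓ' : Loc) (P : Fm) : Deriv {(ℓ, P), (ℓ', neg P)}
  | one (ℓ : Loc) : Deriv {(ℓ, Fm.one)}
  | top (ℓ : Loc) (Γ : Sequent) : Deriv ((ℓ, Fm.top) ::ₘ Γ)
  | bot (ℓ : Loc) (Γ : Sequent) : Deriv Γ → Deriv ((ℓ, Fm.bot) ::ₘ Γ)
  | tensor (ℓ : Loc) (P Q : Fm) (Γ Δ : Sequent) :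
      Deriv ((ℓ ++ [0], P) ::ₘ Γ) → Deriv ((ℓ ++ [1], Q) ::ₘ Δ) →
      Deriv ((ℓ, Fm.tensor P Q) ::ₘ (Γ + Δ))
  | parr (ℓ : Loc) (P Q : Fm) (Γ : Sequent) :
      Deriv ((ℓ ++ [0], P) ::ₘ (ℓ ++ [1], Q) ::ₘ Γ) →
      Deriv ((ℓ, Fm.parr P Q) ::ₘ Γ)
  | oplus₀ (ℓ : Loc) (P Q : Fm) (Γ : Sequent) :
      Deriv ((ℓ ++ [0], P) ::ₘ Γ) → Deriv ((ℓ, Fm.oplus P Q) ::ₘ Γ)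
  | oplus₁ (ℓ : Loc) (P Q : Fm) (Γ : Sequent) :
      Deriv ((ℓ ++ [1], Q) ::ₘ Γ) → Deriv ((ℓ, Fm.oplus P Q) ::ₘ Γ)
  | wth (ℓ : Loc) (P Q : Fm) (Γ : Sequent) :
      Deriv ((ℓ ++ [0], P) ::ₘ Γ) → Deriv ((ℓ ++ [1], Q) ::ₘ Γ) →
      Deriv ((ℓ, Fm.wth P Q) ::ₘ Γ)
  | muR (ℓ : Loc) (B : Fm) (Γ : Sequent) :
      Deriv ((ℓ ++ [0], subst 0 (Fm.mu B) B) ::ₘ Γ) →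
      Deriv ((ℓ, Fm.mu B) ::ₘ Γ)
  | nuR (ℓ : Loc) (B S : Fm) (Γ : Sequent) :
      Deriv ((ℓ ++ [0], S) ::ₘ Γ) →
      Deriv {(([] : Loc), neg S), (([] : Loc), subst 0 S B)} →
      Deriv ((ℓ, Fm.nu B) ::ₘ Γ)

/-- Synchronous formulas (positive toplevel connective). -/
def isSync : Fm → Prop
  | .one | .zero | .atom _ | .var _ => True
  | .tensor _ _ | .oplus _ _ | .mu _ => True
  | _ => False

/-- Asynchronous formulas. -/
def isAsync (P : Fm) : Prop := ¬ isSync P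

/-- The leaf sequents of the synchronous trunk of a derivation: the conclusions
of asynchronous rules reached from the root through synchronous rules only,
together with the initial sequents (`init`, `1`) so reached. -/
def trunkLeaves : {Γ : Sequent} → Deriv Γ → Set Sequent
  | _, .init ℓ ℓ' P => {({(ℓ, P), (ℓ', neg P)} : Sequent)}
  | _, .one ℓ => {({(ℓ, Fm.one)} : Sequent)}
  | _, .top ℓ Γ => {(ℓ, Fm.top) ::ₘ Γ}
  | _, .bot ℓ Γ _ => {(ℓ, Fm.bot) ::ₘ Γ}
  | _, .tensor _ _ _ _ _ d₁ d₂ => trunkLeaves d₁ ∪ trunkLeaves d₂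
  | _, .parr ℓ P Q Γ _ => {(ℓ, Fm.parr P Q) ::ₘ Γ}
  | _, .oplus₀ _ _ _ _ d => trunkLeaves d
  | _, .oplus₁ _ _ _ _ d => trunkLeaves d
  | _, .wth ℓ P Q Γ _ _ => {(ℓ, Fm.wth P Q) ::ₘ Γ}
  | _, .muR _ _ _ d => trunkLeaves d
  | _, .nuR ℓ B _ Γ _ _ => {(ℓ, Fm.nu B) ::ₘ Γ}

/-- The focalization-graph precedence relation on the (located) formulas of the
conclusion: `x ≺ y` iff some leaf sequent of the synchronous trunk contains an
asynchronous subformula-occurrence of `x` (a located formula whose location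
extends that of `x`) together with a synchronous subformula-occurrence of `y`. -/
def prec {Γ : Sequent} (D : Deriv Γ) (x y : Loc × Fm) : Prop :=
  x ∈ Γ ∧ y ∈ Γ ∧
    ∃ L ∈ trunkLeaves D, ∃ p P' q Q',
      (p, P') ∈ L ∧ (q, Q') ∈ L ∧ x.1 <+: p ∧ y.1 <+: q ∧
        isAsync P' ∧ isSync Q'

/-! ### Auxiliary machinery for the acyclicity proof -/

section Aux

/-- Disjointness of located formulas: neither location is a prefix of the other. -/
abbrev Disj (x y : Loc × Fm) : Prop := ¬ x.1 <+: y.1 ∧ ¬ y.1 <+: x.1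

/-- Pairwise disjointness of a sequent's locations. -/
abbrev PW (Γ : Sequent) : Prop := Γ.Pairwise Disj

lemma disj_symm : Symmetric Disj := fun _ _ h => ⟨h.2, h.1⟩

lemma disj_irrefl (a : Loc × Fm) : ¬ Disj a a := fun h => h.1 (List.prefix_refl _)

lemma pw_cons_iff {a : Loc × Fm} {s : Sequent} :
    PW (a ::ₘ s) ↔ (∀ b ∈ s, Disj a b) ∧ PW s := by
  constructor
  · rintro ⟨l, hl, hp⟩
    have hperm : l.Perm (a :: s.toList) := by
      rw [← Multiset.coe_eq_coe, ← hl, ← Multiset.cons_coe, Multiset.coe_toList]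
    have hp' : (a :: s.toList).Pairwise Disj :=
      (hperm.pairwise_iff (fun h => ⟨h.2, h.1⟩)).1 hp
    rw [List.pairwise_cons] at hp'
    refine ⟨fun b hb => hp'.1 b (Multiset.mem_toList.2 hb), s.toList, ?_, hp'.2⟩
    rw [Multiset.coe_toList]
  · rintro ⟨hab, l, rfl, hp⟩
    exact ⟨a :: l, rfl, List.pairwise_cons.2 ⟨fun b hb => hab b (by exact_mod_cast hb), hp⟩⟩

lemma pw_of_le {s t : Sequent} (h : s ≤ t) (hp : PW t) : PW s := by
  obtain ⟨l, rfl, hpl⟩ := hp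
  have hs : (s.toList : Multiset (Loc × Fm)) = s := Multiset.coe_toList s
  rw [← hs] at h
  obtain ⟨l'', h1, h2⟩ := Multiset.coe_le.1 h
  refine ⟨s.toList, hs.symm, ?_⟩
  exact (h1.pairwise_iff (fun h => ⟨h.2, h.1⟩)).1 (hpl.sublist h2)

lemma pw_eq_of_mem {Γ : Sequent} (h : PW Γ) {a b : Loc × Fm}
    (ha : a ∈ Γ) (hb : b ∈ Γ) (hp : a.1 <+: b.1) : a = b := by
  obtain ⟨l, rfl, hpl⟩ := h
  by_contra hne
  have := (haveI : Std.Symm Disj := ⟨fun _ _ h => disj_symm h⟩; List.Pairwise.forall hpl) (by exact_mod_cast ha) (by exact_mod_cast hb) hne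
  exact this.1 hp

lemma pw_not_mem_both {s t : Sequent} (h : PW (s + t)) {a : Loc × Fm}
    (ha : a ∈ s) (hb : a ∈ t) : False := by
  obtain ⟨s', rfl⟩ := Multiset.exists_cons_of_mem ha
  have : PW (a ::ₘ (s' + t)) := by rwa [Multiset.cons_add] at h
  exact disj_irrefl a ((pw_cons_iff.1 this).1 a (Multiset.mem_add.2 (Or.inr hb)))

lemma pw_head_not_mem {a : Loc × Fm} {s : Sequent} (h : PW (a ::ₘ s)) : a ∉ s :=
  fun ha => disj_irrefl a ((pw_cons_iff.1 h).1 a ha)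

/-- Pairwise disjointness is preserved when passing to a premise of a
synchronous rule: the principal location is extended by one step and the
context may shrink. -/
lemma pw_step {ℓ : Loc} {i : ℕ} {C C' : Fm} {Γ Γ' : Sequent} (hle : Γ' ≤ Γ)
    (h : PW ((ℓ, C) ::ₘ Γ)) : PW ((ℓ ++ [i], C') ::ₘ Γ') := by
  rcases pw_cons_iff.1 h with ⟨hd, hΓ⟩
  refine pw_cons_iff.2 ⟨?_, pw_of_le hle hΓ⟩
  intro b hb
  have hdb := hd b (Multiset.mem_of_le hle hb)
  have hex : ℓ <+: ℓ ++ [i] := ⟨[i], rfl⟩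
  constructor
  · intro hpre
    exact hdb.1 (hex.trans hpre)
  · intro hpre
    rcases List.prefix_or_prefix_of_prefix hpre hex with h' | h'
    · exact hdb.2 h'
    · exact hdb.1 h'

/-- Every conclusion of a derivation is a nonempty sequent. -/
lemma deriv_ne_zero {Γ : Sequent} (D : Deriv Γ) : Γ ≠ 0 := by
  cases D <;> simp [Multiset.insert_eq_cons]

/-- Every located formula occurring in a trunk leaf is a sublocation of some
formula of the conclusion. -/
lemma leaf_loc {Γ : Sequent} (d : Deriv Γ) :
    ∀ L ∈ trunkLeaves d, ∀ x ∈ L, ∃ y ∈ Γ, y.1 <+: x.1 := by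
  induction d with
  | init ℓ ℓ' P => exact fun L hL x hx => ⟨x, by rwa [Set.mem_singleton_iff.1 hL] at hx,
      List.prefix_refl _⟩
  | one ℓ => exact fun L hL x hx => ⟨x, by rwa [Set.mem_singleton_iff.1 hL] at hx,
      List.prefix_refl _⟩
  | top ℓ Γ => exact fun L hL x hx => ⟨x, by rwa [Set.mem_singleton_iff.1 hL] at hx,
      List.prefix_refl _⟩
  | bot ℓ Γ d ih => exact fun L hL x hx => ⟨x, by rwa [Set.mem_singleton_iff.1 hL] at hx,
      List.prefix_refl _⟩
  | parr ℓ P Q Γ d ih => exact fun L hL x hx => ⟨x, by rwa [Set.mem_singleton_iff.1 hL] at hx,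
      List.prefix_refl _⟩
  | wth ℓ P Q Γ d₁ d₂ ih₁ ih₂ => exact fun L hL x hx =>
      ⟨x, by rwa [Set.mem_singleton_iff.1 hL] at hx, List.prefix_refl _⟩
  | nuR ℓ B S Γ d₁ d₂ ih₁ ih₂ => exact fun L hL x hx =>
      ⟨x, by rwa [Set.mem_singleton_iff.1 hL] at hx, List.prefix_refl _⟩
  | tensor ℓ P Q Γ Δ d₁ d₂ ih₁ ih₂ =>
    intro L hL x hx
    rcases hL with hL | hL
    · obtain ⟨y, hy, hpre⟩ := ih₁ L hL x hx
      rcases Multiset.mem_cons.1 hy with rfl | hy'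
      · exact ⟨(ℓ, Fm.tensor P Q), Multiset.mem_cons_self _ _,
          List.IsPrefix.trans (List.prefix_append ℓ [0]) hpre⟩
      · exact ⟨y, Multiset.mem_cons_of_mem (Multiset.mem_add.2 (Or.inl hy')), hpre⟩
    · obtain ⟨y, hy, hpre⟩ := ih₂ L hL x hx
      rcases Multiset.mem_cons.1 hy with rfl | hy'
      · exact ⟨(ℓ, Fm.tensor P Q), Multiset.mem_cons_self _ _,
          List.IsPrefix.trans (List.prefix_append ℓ [1]) hpre⟩
      · exact ⟨y, Multiset.mem_cons_of_mem (Multiset.mem_add.2 (Or.inr hy')), hpre⟩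
  | oplus₀ ℓ P Q Γ d ih =>
    intro L hL x hx
    obtain ⟨y, hy, hpre⟩ := ih L hL x hx
    rcases Multiset.mem_cons.1 hy with rfl | hy'
    · exact ⟨(ℓ, Fm.oplus P Q), Multiset.mem_cons_self _ _,
        List.IsPrefix.trans (List.prefix_append ℓ [0]) hpre⟩
    · exact ⟨y, Multiset.mem_cons_of_mem hy', hpre⟩
  | oplus₁ ℓ P Q Γ d ih =>
    intro L hL x hx
    obtain ⟨y, hy, hpre⟩ := ih L hL x hx
    rcases Multiset.mem_cons.1 hy with rfl | hy'
    · exact ⟨(ℓ, Fm.oplus P Q), Multiset.mem_cons_self _ _,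
        List.IsPrefix.trans (List.prefix_append ℓ [1]) hpre⟩
    · exact ⟨y, Multiset.mem_cons_of_mem hy', hpre⟩
  | muR ℓ B Γ d ih =>
    intro L hL x hx
    obtain ⟨y, hy, hpre⟩ := ih L hL x hx
    rcases Multiset.mem_cons.1 hy with rfl | hy'
    · exact ⟨(ℓ, Fm.mu B), Multiset.mem_cons_self _ _,
        List.IsPrefix.trans (List.prefix_append ℓ [0]) hpre⟩
    · exact ⟨y, Multiset.mem_cons_of_mem hy', hpre⟩

/-- Locating a conclusion formula in a premise: if a sublocation of a
conclusion formula `a` occurs in a trunk leaf of a premise, then either `a` is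
the principal formula (and the sublocation goes through the premise's
subformula) or `a` belongs to the premise's context. -/
lemma locate_premise {Sig Γ' : Sequent} {ℓ ℓ' : Loc} {C C' : Fm}
    (hPW : PW Sig) (hzS : (ℓ, C) ∈ Sig) (hΓ' : ∀ b ∈ Γ', b ∈ Sig)
    (hext : ℓ <+: ℓ')
    {a : Loc × Fm} (ha : a ∈ Sig) {p : Loc} (hap : a.1 <+: p)
    {y : Loc × Fm} (hy : y ∈ (ℓ', C') ::ₘ Γ') (hyp : y.1 <+: p) :
    (a = (ℓ, C) ∧ ℓ' <+: p) ∨ a ∈ Γ' := by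
  rcases Multiset.mem_cons.1 hy with rfl | hyΓ
  · left
    refine ⟨?_, hyp⟩
    have hℓp : ℓ <+: p := hext.trans hyp
    rcases List.prefix_or_prefix_of_prefix hap hℓp with h | h
    · exact pw_eq_of_mem hPW ha hzS h
    · exact (pw_eq_of_mem hPW hzS ha h).symm
  · rcases List.prefix_or_prefix_of_prefix hap hyp with h | h
    · right; rw [pw_eq_of_mem hPW ha (hΓ' _ hyΓ) h]; exact hyΓ
    · right; rw [← pw_eq_of_mem hPW (hΓ' _ hyΓ) ha h]; exact hyΓ

/-- A relation whose edges go from `A`-elements to `S`-elements, with `A` and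
`S` incompatible, has no cycles. -/
lemma no_cycle_of_async_sync {α : Type*} {r : α → α → Prop} {A S : α → Prop}
    (h : ∀ a b, r a b → A a ∧ S b) (hAS : ∀ a, A a → S a → False) :
    ∀ x, ¬ Relation.TransGen r x x := by
  intro x hx
  have hS : S x := by
    cases hx with
    | single h' => exact (h _ _ h').2
    | tail _ h' => exact (h _ _ h').2
  have hA : A x := by
    obtain ⟨c, h', -⟩ := Relation.TransGen.head'_iff.1 hx
    exact (h _ _ h').1
  exact hAS x hA hS

/-- Union of two acyclic relations whose vertex sets overlap in a single
point `z` is acyclic (the tensor case of the focalization theorem). -/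
lemma union_acyclic {α : Type*} {r₁ r₂ : α → α → Prop} {V₁ V₂ : α → Prop} {z : α}
    (h₁ : ∀ a b, r₁ a b → V₁ a ∧ V₁ b) (h₂ : ∀ a b, r₂ a b → V₂ a ∧ V₂ b)
    (hz : ∀ a, V₁ a → V₂ a → a = z)
    (a₁ : ∀ x, ¬ Relation.TransGen r₁ x x) (a₂ : ∀ x, ¬ Relation.TransGen r₂ x x) :
    ∀ x, ¬ Relation.TransGen (fun a b => r₁ a b ∨ r₂ a b) x x := by
  have e₁ : ∀ {x y}, Relation.TransGen r₁ x y → V₁ x ∧ V₁ y := by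
    intro x y h
    induction h with
    | single h' => exact h₁ _ _ h'
    | tail _ h' ih => exact ⟨ih.1, (h₁ _ _ h').2⟩
  have e₂ : ∀ {x y}, Relation.TransGen r₂ x y → V₂ x ∧ V₂ y := by
    intro x y h
    induction h with
    | single h' => exact h₂ _ _ h'
    | tail _ h' ih => exact ⟨ih.1, (h₂ _ _ h').2⟩
  have key : ∀ x y, Relation.TransGen (fun a b => r₁ a b ∨ r₂ a b) x y →
      (Relation.TransGen r₁ z z ∨ Relation.TransGen r₂ z z) ∨
      (Relation.TransGen r₁ x y ∨ Relation.TransGen r₂ x y) ∨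
      ((Relation.TransGen r₁ x z ∨ Relation.TransGen r₂ x z) ∧
       (Relation.TransGen r₁ z y ∨ Relation.TransGen r₂ z y)) := by
    intro x y h
    induction h with
    | single h' =>
      rcases h' with h' | h'
      · exact Or.inr (Or.inl (Or.inl (Relation.TransGen.single h')))
      · exact Or.inr (Or.inl (Or.inr (Relation.TransGen.single h')))
    | @tail b c hxb h' ih =>
      rcases ih with hc | hpure | ⟨hxz, hzb⟩
      · exact Or.inl hc
      · rcases hpure with hp1 | hp2
        · rcases h' with h' | h'
          · exact Or.inr (Or.inl (Or.inl (hp1.tail h')))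
          · have hbz : b = z := hz b (e₁ hp1).2 (h₂ _ _ h').1
            subst hbz
            exact Or.inr (Or.inr ⟨Or.inl hp1, Or.inr (Relation.TransGen.single h')⟩)
        · rcases h' with h' | h'
          · have hbz : b = z := hz b (h₁ _ _ h').1 (e₂ hp2).2
            subst hbz
            exact Or.inr (Or.inr ⟨Or.inr hp2, Or.inl (Relation.TransGen.single h')⟩)
          · exact Or.inr (Or.inl (Or.inr (hp2.tail h')))
      · rcases hzb with hzb | hzb
        · rcases h' with h' | h'
          · exact Or.inr (Or.inr ⟨hxz, Or.inl (hzb.tail h')⟩)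
          · have hbz : b = z := hz b (e₁ hzb).2 (h₂ _ _ h').1
            exact Or.inl (Or.inl (hbz ▸ hzb))
        · rcases h' with h' | h'
          · have hbz : b = z := hz b (h₁ _ _ h').1 (e₂ hzb).2
            exact Or.inl (Or.inr (hbz ▸ hzb))
          · exact Or.inr (Or.inr ⟨hxz, Or.inr (hzb.tail h')⟩)
  intro x hx
  rcases key x x hx with hc | hpure | ⟨hxz, hzx⟩
  · rcases hc with hc | hc
    · exact a₁ z hc
    · exact a₂ z hc
  · rcases hpure with hp | hp
    · exact a₁ x hp
    · exact a₂ x hp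
  · rcases hxz with hxz | hxz <;> rcases hzx with hzx | hzx
    · exact a₁ x (hxz.trans hzx)
    · have : x = z := hz x (e₁ hxz).1 (e₂ hzx).2
      exact a₂ z (this ▸ hzx)
    · have : x = z := hz x (e₁ hzx).2 (e₂ hxz).1
      exact a₁ z (this ▸ hzx)
    · exact a₂ x (hxz.trans hzx)

/-- In a finite nonempty sequent, an acyclic relation has a minimal element. -/
lemma exists_min {Γ : Sequent} (hne : Γ ≠ 0) (r : (Loc × Fm) → (Loc × Fm) → Prop)
    (hmem : ∀ a b, r a b → a ∈ Γ) (hacyc : ∀ x, ¬ Relation.TransGen r x x) :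
    ∃ x ∈ Γ, ∀ y ∈ Γ, ¬ r y x := by
  have hfin : Finite {x // x ∈ Γ} := (Multiset.finite_toSet Γ).to_subtype
  let t : {x // x ∈ Γ} → {x // x ∈ Γ} → Prop := fun a b => Relation.TransGen r a.1 b.1
  have : IsTrans {x // x ∈ Γ} t := ⟨fun _ _ _ h₁ h₂ => h₁.trans h₂⟩
  have : IsIrrefl {x // x ∈ Γ} t := ⟨fun a h => hacyc a.1 h⟩
  have hwf : WellFounded t := Finite.wellFounded_of_trans_of_irrefl t
  obtain ⟨a, ha⟩ := Multiset.exists_mem_of_ne_zero hne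
  obtain ⟨m, -, hmin⟩ := hwf.has_min Set.univ ⟨⟨a, ha⟩, Set.mem_univ _⟩
  refine ⟨m.1, m.2, fun y hy hr => ?_⟩
  exact hmin ⟨y, hy⟩ (Set.mem_univ _) (Relation.TransGen.single hr)

/-- Acyclicity for a derivation whose trunk stops at the root (the conclusion
itself is the unique trunk leaf). -/
lemma leaf_edge {Γ : Sequent} (D : Deriv Γ) (hL : trunkLeaves D = {Γ}) (hPW : PW Γ) :
    ∀ x, ¬ Relation.TransGen (prec D) x x := by
  refine no_cycle_of_async_sync (A := fun x => isAsync x.2) (S := fun x => isSync x.2)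
    ?_ (fun a h₁ h₂ => h₁ h₂)
  rintro a b ⟨ha, hb, L, hLmem, p, P', q, Q', hpL, hqL, hap, hbq, hA, hS⟩
  rw [hL, Set.mem_singleton_iff] at hLmem
  subst hLmem
  have h1 : a = (p, P') := pw_eq_of_mem hPW ha hpL hap
  have h2 : b = (q, Q') := pw_eq_of_mem hPW hb hqL hbq
  exact ⟨by rw [h1]; exact hA, by rw [h2]; exact hS⟩

/-- Acyclicity for a unary synchronous rule, by transfer to the premise. -/
lemma step_unary {ℓ : Loc} {i : ℕ} {C C' : Fm} {Γ : Sequent}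
    (D : Deriv ((ℓ, C) ::ₘ Γ)) (d : Deriv ((ℓ ++ [i], C') ::ₘ Γ))
    (hL : trunkLeaves D = trunkLeaves d) (hPW : PW ((ℓ, C) ::ₘ Γ))
    (IH : ∀ x, ¬ Relation.TransGen (prec d) x x) :
    ∀ x, ¬ Relation.TransGen (prec D) x x := by
  classical
  let f : Loc × Fm → Loc × Fm := fun a => if a = (ℓ, C) then (ℓ ++ [i], C') else a
  have hzΓ : (ℓ, C) ∉ Γ := pw_head_not_mem hPW
  have hom : ∀ a b, prec D a b → prec d (f a) (f b) := by
    rintro a b ⟨ha, hb, L, hLmem, p, P', q, Q', hpL, hqL, hap, hbq, hA, hS⟩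
    rw [hL] at hLmem
    have loc : ∀ (c : Loc × Fm), c ∈ (ℓ, C) ::ₘ Γ → ∀ (u : Loc) (F : Fm), (u, F) ∈ L →
        c.1 <+: u → f c ∈ (ℓ ++ [i], C') ::ₘ Γ ∧ (f c).1 <+: u := by
      intro c hc u F huL hcu
      obtain ⟨y, hy, hyu⟩ := leaf_loc d L hLmem (u, F) huL
      rcases locate_premise hPW (Multiset.mem_cons_self _ _)
          (fun b hb => Multiset.mem_cons_of_mem hb) ⟨[i], rfl⟩ hc hcu hy hyu with
        ⟨hcz, hpre⟩ | hcΓ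
      · rw [show f c = (ℓ ++ [i], C') from if_pos hcz]
        exact ⟨Multiset.mem_cons_self _ _, hpre⟩
      · have hcne : c ≠ (ℓ, C) := fun h => hzΓ (h ▸ hcΓ)
        rw [show f c = c from if_neg hcne]
        exact ⟨Multiset.mem_cons_of_mem hcΓ, hcu⟩
    obtain ⟨hfa, hfap⟩ := loc a ha p P' hpL hap
    obtain ⟨hfb, hfbq⟩ := loc b hb q Q' hqL hbq
    exact ⟨hfa, hfb, L, hLmem, p, P', q, Q', hpL, hqL, hfap, hfbq, hA, hS⟩
  intro x hx
  exact IH (f x) (hx.lift f hom)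

/-- Edges of the focalization graph realized through the trunk leaves of one
premise. -/
abbrev sideRel (dL : Set Sequent) (Sig : Sequent) (a b : Loc × Fm) : Prop :=
  a ∈ Sig ∧ b ∈ Sig ∧ ∃ L ∈ dL, ∃ p P' q Q',
    (p, P') ∈ L ∧ (q, Q') ∈ L ∧ a.1 <+: p ∧ b.1 <+: q ∧ isAsync P' ∧ isSync Q'

/-- Acyclicity for the tensor rule: only the principal formula has subformula
occurrences in the trunk leaves of both premises, so any cycle would be
confined to one premise. -/
lemma step_tensor {ℓ : Loc} {P Q : Fm} {Γ Δ : Sequent}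
    (d₁ : Deriv ((ℓ ++ [0], P) ::ₘ Γ)) (d₂ : Deriv ((ℓ ++ [1], Q) ::ₘ Δ))
    (hPW : PW ((ℓ, Fm.tensor P Q) ::ₘ (Γ + Δ)))
    (IH₁ : ∀ x, ¬ Relation.TransGen (prec d₁) x x)
    (IH₂ : ∀ x, ¬ Relation.TransGen (prec d₂) x x) :
    ∀ x, ¬ Relation.TransGen (prec (Deriv.tensor ℓ P Q Γ Δ d₁ d₂)) x x := by
  classical
  have hzΓΔ : (ℓ, Fm.tensor P Q) ∉ Γ + Δ := pw_head_not_mem hPW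
  have hzΓ : (ℓ, Fm.tensor P Q) ∉ Γ := fun h => hzΓΔ (Multiset.mem_add.2 (Or.inl h))
  have hzΔ : (ℓ, Fm.tensor P Q) ∉ Δ := fun h => hzΓΔ (Multiset.mem_add.2 (Or.inr h))
  have hsplit : ∀ a b, prec (Deriv.tensor ℓ P Q Γ Δ d₁ d₂) a b →
      sideRel (trunkLeaves d₁) ((ℓ, Fm.tensor P Q) ::ₘ (Γ + Δ)) a b ∨
      sideRel (trunkLeaves d₂) ((ℓ, Fm.tensor P Q) ::ₘ (Γ + Δ)) a b := by
    rintro a b ⟨ha, hb, L, hLmem, p, P', q, Q', hpL, hqL, hap, hbq, hA, hS⟩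
    rcases hLmem with hLmem | hLmem
    · exact Or.inl ⟨ha, hb, L, hLmem, p, P', q, Q', hpL, hqL, hap, hbq, hA, hS⟩
    · exact Or.inr ⟨ha, hb, L, hLmem, p, P', q, Q', hpL, hqL, hap, hbq, hA, hS⟩
  -- locating conclusion formulas relative to the left premise
  have loc₁ : ∀ c ∈ (ℓ, Fm.tensor P Q) ::ₘ (Γ + Δ), ∀ (L : Sequent),
      L ∈ trunkLeaves d₁ → ∀ (u : Loc) (F : Fm), (u, F) ∈ L → c.1 <+: u →
      (c = (ℓ, Fm.tensor P Q) ∧ ℓ ++ [0] <+: u) ∨ c ∈ Γ := by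
    intro c hc L hL u F huL hcu
    obtain ⟨y, hy, hyu⟩ := leaf_loc d₁ L hL (u, F) huL
    exact locate_premise hPW (Multiset.mem_cons_self _ _)
      (fun b hb => Multiset.mem_cons_of_mem (Multiset.mem_add.2 (Or.inl hb)))
      (List.prefix_append ℓ [0]) hc hcu hy hyu
  have loc₂ : ∀ c ∈ (ℓ, Fm.tensor P Q) ::ₘ (Γ + Δ), ∀ (L : Sequent),
      L ∈ trunkLeaves d₂ → ∀ (u : Loc) (F : Fm), (u, F) ∈ L → c.1 <+: u →
      (c = (ℓ, Fm.tensor P Q) ∧ ℓ ++ [1] <+: u) ∨ c ∈ Δ := by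
    intro c hc L hL u F huL hcu
    obtain ⟨y, hy, hyu⟩ := leaf_loc d₂ L hL (u, F) huL
    exact locate_premise hPW (Multiset.mem_cons_self _ _)
      (fun b hb => Multiset.mem_cons_of_mem (Multiset.mem_add.2 (Or.inr hb)))
      (List.prefix_append ℓ [1]) hc hcu hy hyu
  have h₁ : ∀ a b, sideRel (trunkLeaves d₁) ((ℓ, Fm.tensor P Q) ::ₘ (Γ + Δ)) a b →
      (a = (ℓ, Fm.tensor P Q) ∨ a ∈ Γ) ∧ (b = (ℓ, Fm.tensor P Q) ∨ b ∈ Γ) := by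
    rintro a b ⟨ha, hb, L, hLmem, p, P', q, Q', hpL, hqL, hap, hbq, hA, hS⟩
    constructor
    · rcases loc₁ a ha L hLmem p P' hpL hap with ⟨h, -⟩ | h
      exacts [Or.inl h, Or.inr h]
    · rcases loc₁ b hb L hLmem q Q' hqL hbq with ⟨h, -⟩ | h
      exacts [Or.inl h, Or.inr h]
  have h₂ : ∀ a b, sideRel (trunkLeaves d₂) ((ℓ, Fm.tensor P Q) ::ₘ (Γ + Δ)) a b →
      (a = (ℓ, Fm.tensor P Q) ∨ a ∈ Δ) ∧ (b = (ℓ, Fm.tensor P Q) ∨ b ∈ Δ) := by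
    rintro a b ⟨ha, hb, L, hLmem, p, P', q, Q', hpL, hqL, hap, hbq, hA, hS⟩
    constructor
    · rcases loc₂ a ha L hLmem p P' hpL hap with ⟨h, -⟩ | h
      exacts [Or.inl h, Or.inr h]
    · rcases loc₂ b hb L hLmem q Q' hqL hbq with ⟨h, -⟩ | h
      exacts [Or.inl h, Or.inr h]
  have hz : ∀ a, (a = (ℓ, Fm.tensor P Q) ∨ a ∈ Γ) → (a = (ℓ, Fm.tensor P Q) ∨ a ∈ Δ) →
      a = (ℓ, Fm.tensor P Q) := by
    rintro a (h | h) h'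
    · exact h
    · rcases h' with h' | h'
      · exact h'
      · exact absurd (pw_not_mem_both (pw_cons_iff.1 hPW).2 h h') (fun f => f)
  -- transfer of left-sided cycles to the left premise
  let f₁ : Loc × Fm → Loc × Fm := fun a => if a = (ℓ, Fm.tensor P Q) then (ℓ ++ [0], P) else a
  have hom₁ : ∀ a b, sideRel (trunkLeaves d₁) ((ℓ, Fm.tensor P Q) ::ₘ (Γ + Δ)) a b →
      prec d₁ (f₁ a) (f₁ b) := by
    rintro a b ⟨ha, hb, L, hLmem, p, P', q, Q', hpL, hqL, hap, hbq, hA, hS⟩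
    have lift : ∀ c ∈ (ℓ, Fm.tensor P Q) ::ₘ (Γ + Δ), ∀ (u : Loc) (F : Fm), (u, F) ∈ L →
        c.1 <+: u → f₁ c ∈ (ℓ ++ [0], P) ::ₘ Γ ∧ (f₁ c).1 <+: u := by
      intro c hc u F huL hcu
      rcases loc₁ c hc L hLmem u F huL hcu with ⟨hcz, hpre⟩ | hcΓ
      · rw [show f₁ c = (ℓ ++ [0], P) from if_pos hcz]
        exact ⟨Multiset.mem_cons_self _ _, hpre⟩
      · have hcne : c ≠ (ℓ, Fm.tensor P Q) := fun h => hzΓ (h ▸ hcΓ)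
        rw [show f₁ c = c from if_neg hcne]
        exact ⟨Multiset.mem_cons_of_mem hcΓ, hcu⟩
    obtain ⟨hfa, hfap⟩ := lift a ha p P' hpL hap
    obtain ⟨hfb, hfbq⟩ := lift b hb q Q' hqL hbq
    exact ⟨hfa, hfb, L, hLmem, p, P', q, Q', hpL, hqL, hfap, hfbq, hA, hS⟩
  have a₁ : ∀ x, ¬ Relation.TransGen
      (sideRel (trunkLeaves d₁) ((ℓ, Fm.tensor P Q) ::ₘ (Γ + Δ))) x x :=
    fun x hx => IH₁ (f₁ x) (hx.lift f₁ hom₁)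
  -- transfer of right-sided cycles to the right premise
  let f₂ : Loc × Fm → Loc × Fm := fun a => if a = (ℓ, Fm.tensor P Q) then (ℓ ++ [1], Q) else a
  have hom₂ : ∀ a b, sideRel (trunkLeaves d₂) ((ℓ, Fm.tensor P Q) ::ₘ (Γ + Δ)) a b →
      prec d₂ (f₂ a) (f₂ b) := by
    rintro a b ⟨ha, hb, L, hLmem, p, P', q, Q', hpL, hqL, hap, hbq, hA, hS⟩
    have lift : ∀ c ∈ (ℓ, Fm.tensor P Q) ::ₘ (Γ + Δ), ∀ (u : Loc) (F : Fm), (u, F) ∈ L →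
        c.1 <+: u → f₂ c ∈ (ℓ ++ [1], Q) ::ₘ Δ ∧ (f₂ c).1 <+: u := by
      intro c hc u F huL hcu
      rcases loc₂ c hc L hLmem u F huL hcu with ⟨hcz, hpre⟩ | hcΔ
      · rw [show f₂ c = (ℓ ++ [1], Q) from if_pos hcz]
        exact ⟨Multiset.mem_cons_self _ _, hpre⟩
      · have hcne : c ≠ (ℓ, Fm.tensor P Q) := fun h => hzΔ (h ▸ hcΔ)
        rw [show f₂ c = c from if_neg hcne]
        exact ⟨Multiset.mem_cons_of_mem hcΔ, hcu⟩
    obtain ⟨hfa, hfap⟩ := lift a ha p P' hpL hap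
    obtain ⟨hfb, hfbq⟩ := lift b hb q Q' hqL hbq
    exact ⟨hfa, hfb, L, hLmem, p, P', q, Q', hpL, hqL, hfap, hfbq, hA, hS⟩
  have a₂ : ∀ x, ¬ Relation.TransGen
      (sideRel (trunkLeaves d₂) ((ℓ, Fm.tensor P Q) ::ₘ (Γ + Δ))) x x :=
    fun x hx => IH₂ (f₂ x) (hx.lift f₂ hom₂)
  intro x hx
  exact union_acyclic h₁ h₂ hz a₁ a₂ x (Relation.TransGen.mono hsplit x x hx)

/-- Acyclicity of the focalization graph, by induction on the derivation. -/
lemma acyc : ∀ {Γ : Sequent} (D : Deriv Γ), PW Γ →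
    ∀ x, ¬ Relation.TransGen (prec D) x x := by
  intro Γ D
  induction D with
  | init ℓ ℓ' P => exact fun h => leaf_edge _ rfl h
  | one ℓ => exact fun h => leaf_edge _ rfl h
  | top ℓ Γ => exact fun h => leaf_edge _ rfl h
  | bot ℓ Γ d ih => exact fun h => leaf_edge _ rfl h
  | parr ℓ P Q Γ d ih => exact fun h => leaf_edge _ rfl h
  | wth ℓ P Q Γ d₁ d₂ ih₁ ih₂ => exact fun h => leaf_edge _ rfl h
  | nuR ℓ B S Γ d₁ d₂ ih₁ ih₂ => exact fun h => leaf_edge _ rfl h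
  | tensor ℓ P Q Γ Δ d₁ d₂ ih₁ ih₂ =>
    intro hPW
    exact step_tensor d₁ d₂ hPW
      (ih₁ (pw_step (Multiset.le_add_right Γ Δ) hPW))
      (ih₂ (pw_step (Multiset.le_add_left Δ Γ) hPW))
  | oplus₀ ℓ P Q Γ d ih =>
    intro hPW
    exact step_unary (Deriv.oplus₀ ℓ P Q Γ d) d rfl hPW (ih (pw_step le_rfl hPW))
  | oplus₁ ℓ P Q Γ d ih =>
    intro hPW
    exact step_unary (Deriv.oplus₁ ℓ P Q Γ d) d rfl hPW (ih (pw_step le_rfl hPW))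
  | muR ℓ B Γ d ih =>
    intro hPW
    exact step_unary (Deriv.muR ℓ B Γ d) d rfl hPW (ih (pw_step le_rfl hPW))

end Aux

/-- The focalization graph is acyclic; in particular, if every formula of the
conclusion is synchronous, some formula of the conclusion is minimal for `≺`
(a valid focus). The conclusion sequent is assumed to consist of pairwise
disjoint locations. -/
theorem prec_acyclic {Γ : Sequent} (D : Deriv Γ)
    (hdisj : Γ.Pairwise (fun x y => ¬ x.1 <+: y.1 ∧ ¬ y.1 <+: x.1)) :
    (∀ x, ¬ Relation.TransGen (prec D) x x) ∧
    ((∀ x ∈ Γ, isSync x.2) → ∃ x ∈ Γ, ∀ y ∈ Γ, ¬ prec D y x) := by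
  have hac : ∀ x, ¬ Relation.TransGen (prec D) x x := acyc D hdisj
  exact ⟨hac, fun _ => exists_min (deriv_ne_zero D) _ (fun a b h => h.1) hac⟩

end MuMALL
end
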